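/- Let s_λ be the minimal integer s such that the lowest weight vector v_{w₀(λ)} of V(λ) lies in V(λ)_s. Then s_λ = deg p_λ(q) and V(λ) = V(λ)_{s_λ}, i.e. the filtration stabilizes exactly at the step in which the lowest weight vector first appears. -/

import Mathlib

open Module Polynomial

namespace PBW

variable {L : Type*} [LieRing L] [LieAlgebra ℂ L]
variable {V : Type*} [AddCommGroup V] [Module ℂ V] [LieRingModule L V] [LieModule ℂ L V]

/-- One step of the PBW filtration: `W ↦ W + n⁻ · W`. -/
def step (N : LieSubalgebra ℂ L) (W : Submodule ℂ V) : Submodule ℂ V :=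
  W ⊔ Submodule.span ℂ { z : V | ∃ x ∈ N, ∃ w ∈ W, z = ⁅x, w⁆ }

/-- The PBW filtration `V(λ)_s = U(n⁻)_s · v` of the cyclic module generated by `v`,
obtained by iterating `step`. -/
def filt (N : LieSubalgebra ℂ L) (v : V) (s : ℕ) : Submodule ℂ V :=
  (step N)^[s] (Submodule.span ℂ {v})

/-- The coefficients of the Hilbert–Poincaré polynomial:
`dim (V(λ)_s / V(λ)_{s-1})` with the convention `V(λ)_{-1} = 0`. -/
noncomputable def hpCoeff (N : LieSubalgebra ℂ L) (v : V) : ℕ → ℕ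
  | 0 => finrank ℂ (filt N v 0)
  | s + 1 => finrank ℂ (filt N v (s + 1)) - finrank ℂ (filt N v s)

/-- The Hilbert–Poincaré polynomial `p_λ(q) = ∑_{s ≥ 0} dim (V(λ)_s / V(λ)_{s-1}) qˢ`
of the PBW-graded module.  (The filtration of the finite-dimensional module `V` is
increasing, hence stabilizes after at most `dim V` steps, so all higher coefficients
vanish and the sum may be truncated at `s = dim V`.) -/
noncomputable def hp (N : LieSubalgebra ℂ L) (v : V) : Polynomial ℕ :=
  ∑ s ∈ Finset.range (finrank ℂ V + 1), C (hpCoeff N v s) * X ^ s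

/-- The `χ`-weight space of the module `V` for the action of the Cartan subalgebra `H`. -/
def wtSpace (H : LieSubalgebra ℂ L) (χ : Module.Dual ℂ H) : Submodule ℂ V where
  carrier := { w : V | ∀ x : H, ⁅(x : L), w⁆ = χ x • w }
  add_mem' := by
    intro a b ha hb x
    simp [lie_add, ha x, hb x, smul_add]
  zero_mem' := by intro x; simp
  smul_mem' := by
    intro c a ha x
    rw [lie_smul, ha x, smul_comm]

/-- A triangular decomposition `g = n⁺ ⊕ h ⊕ n⁻`: `h` is a Cartan subalgebra,
`g` is the internal direct sum of the three subalgebras, and `n⁺`, `n⁻` are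
stable under the adjoint action of `h`. -/
structure IsTriangularDecomp (H npos nneg : LieSubalgebra ℂ L) : Prop where
  cartan : H.IsCartanSubalgebra
  directSum : DirectSum.IsInternal
    (fun i : Fin 3 => ![npos.toSubmodule, H.toSubmodule, nneg.toSubmodule] i)
  pos_stable : ∀ x ∈ H, ∀ y ∈ npos, ⁅x, y⁆ ∈ npos
  neg_stable : ∀ x ∈ H, ∀ y ∈ nneg, ⁅x, y⁆ ∈ nneg

end PBW

/-! Write `b⁺ = n⁺ ⊕ h`, so that `g = n⁻ + b⁺`. If `u` spans a `B`-stable line and `g = A + B`,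
then `⁅b, ⁅a, w⁆⁆ = ⁅⁅b, a⁆, w⁆ + ⁅a, ⁅b, w⁆⁆` shows inductively that every step of the
`A`-filtration generated by `u` is `B`-stable, so its union is a nonzero submodule, i.e. all of
`V(λ)`. With `(A, B) = (n⁻, b⁺)` and `u = v_λ` every `V(λ)_s` is `b⁺`-stable; with
`(A, B) = (b⁺, n⁻)` and `u = v_{w₀(λ)}` the `b⁺`-submodule generated by the lowest weight vector
is `V(λ)`. Hence `v_{w₀(λ)} ∈ V(λ)_s` iff `V(λ)_s = V(λ)`. A filtration step that repeats is
repeated forever, so `V(λ)_s` grows strictly until it is `V(λ)`: the graded pieces are nonzero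
exactly in degrees `s ≤ s_λ`, and `deg p_λ = s_λ`. -/

theorem Polynomial.natDegree_sum_C_mul_X_pow_eq {R : Type*} [Semiring R] {c : ℕ → R} {n d : ℕ}
    (hd : d < n) (hc : c d ≠ 0) (hvanish : ∀ k, d < k → c k = 0) :
    (∑ k ∈ Finset.range n, C (c k) * X ^ k).natDegree = d := by
  have hcoeff :
      ∀ j, (∑ k ∈ Finset.range n, C (c k) * X ^ k).coeff j = if j < n then c j else 0 := by
    simp [finsetSum_coeff]
  refine natDegree_eq_of_le_of_coeff_ne_zero ?_ (by simpa [hcoeff, hd] using hc)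
  exact natDegree_le_iff_coeff_eq_zero.mpr fun j hj => by
    simp [hcoeff, hvanish j (by exact_mod_cast hj)]

namespace PBW

variable {L : Type*} [LieRing L] [LieAlgebra ℂ L]
  {V : Type*} [AddCommGroup V] [Module ℂ V] [LieRingModule L V]

-- `step` for an arbitrary subspace `A` of `L`: `n⁺ ⊕ h` is not given to us as a subalgebra.
def stepBy (A : Submodule ℂ L) (W : Submodule ℂ V) : Submodule ℂ V :=
  W ⊔ Submodule.span ℂ { z : V | ∃ x ∈ A, ∃ w ∈ W, z = ⁅x, w⁆ }

def filtBy (A : Submodule ℂ L) (u : V) (k : ℕ) : Submodule ℂ V :=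
  (stepBy A)^[k] (Submodule.span ℂ {u})

def LieStable (A : Submodule ℂ L) (W : Submodule ℂ V) : Prop :=
  ∀ x ∈ A, ∀ w ∈ W, ⁅x, w⁆ ∈ W

section

variable {A B : Submodule ℂ L} {W Z : Submodule ℂ V} {u : V} {N : LieSubalgebra ℂ L} {v : V}

theorem le_stepBy (A : Submodule ℂ L) (W : Submodule ℂ V) : W ≤ stepBy A W := le_sup_left

theorem lie_mem_stepBy {x : L} (hx : x ∈ A) {w : V} (hw : w ∈ W) : ⁅x, w⁆ ∈ stepBy A W :=
  Submodule.mem_sup_right (Submodule.subset_span ⟨x, hx, w, hw, rfl⟩)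

theorem stepBy_le (hWZ : W ≤ Z) (h : ∀ x ∈ A, ∀ w ∈ W, ⁅x, w⁆ ∈ Z) : stepBy A W ≤ Z := by
  refine sup_le hWZ (Submodule.span_le.mpr ?_)
  rintro _ ⟨x, hx, w, hw, rfl⟩
  exact h x hx w hw

theorem filtBy_succ (A : Submodule ℂ L) (u : V) (k : ℕ) :
    filtBy A u (k + 1) = stepBy A (filtBy A u k) :=
  Function.iterate_succ_apply' _ _ _

theorem filtBy_mono (A : Submodule ℂ L) (u : V) : Monotone (filtBy A u) :=
  monotone_nat_of_le_succ fun k => (filtBy_succ A u k).symm ▸ le_stepBy _ _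

theorem mem_filtBy (A : Submodule ℂ L) (u : V) (k : ℕ) : u ∈ filtBy A u k :=
  filtBy_mono A u k.zero_le (Submodule.mem_span_singleton_self u)

theorem mem_iSup_filtBy {w : V} : w ∈ ⨆ k, filtBy A u k ↔ ∃ k, w ∈ filtBy A u k :=
  Submodule.mem_iSup_of_chain ⟨filtBy A u, filtBy_mono A u⟩ w

theorem LieStable.filtBy_le (hW : LieStable A W) (hu : u ∈ W) (k : ℕ) : filtBy A u k ≤ W := by
  induction k with
  | zero => exact Submodule.span_le.mpr (Set.singleton_subset_iff.mpr hu)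
  | succ k ih =>
    rw [filtBy_succ]
    exact stepBy_le ih fun x hx w hw => hW x hx w (ih hw)

theorem lieStable_iSup_filtBy (A : Submodule ℂ L) (u : V) :
    LieStable A (⨆ k, filtBy A u k) := by
  intro x hx w hw
  obtain ⟨k, hk⟩ := mem_iSup_filtBy.mp hw
  exact mem_iSup_filtBy.mpr ⟨k + 1, (filtBy_succ A u k).symm ▸ lie_mem_stepBy hx hk⟩

theorem filtBy_add_eq_of_succ_eq {t : ℕ} (h : filtBy A u (t + 1) = filtBy A u t) (m : ℕ) :
    filtBy A u (t + m) = filtBy A u t := by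
  induction m with
  | zero => rfl
  | succ m ih => rw [← add_assoc, filtBy_succ, ih, ← filtBy_succ, h]

theorem iSup_filtBy_eq_of_succ_eq {t : ℕ} (h : filtBy A u (t + 1) = filtBy A u t) :
    ⨆ k, filtBy A u k = filtBy A u t :=
  le_antisymm
    (iSup_le fun k => (filtBy_mono A u (Nat.le_add_left k t)).trans
      (filtBy_add_eq_of_succ_eq h k).le)
    (le_iSup (filtBy A u) t)

theorem exists_filtBy_eq_top [FiniteDimensional ℂ V] (htop : ⨆ k, filtBy A u k = ⊤) :
    ∃ s, filtBy A u s = ⊤ := by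
  obtain ⟨s, hs⟩ :=
    monotone_stabilizes_iff_noetherian.mpr inferInstance ⟨filtBy A u, filtBy_mono A u⟩
  exact ⟨s, htop ▸ (iSup_filtBy_eq_of_succ_eq (hs (s + 1) s.le_succ).symm).symm⟩

theorem LieStable.eq_top [LieModule.IsIrreducible ℂ L V] (hAB : A ⊔ B = ⊤) (hA : LieStable A W)
    (hB : LieStable B W) (hW : W ≠ ⊥) : W = ⊤ := by
  let W' : LieSubmodule ℂ L V :=
    { toSubmodule := W
      lie_mem := fun {x w} hw => by
        obtain ⟨a, ha, b, hb, rfl⟩ := Submodule.mem_sup.mp (hAB ▸ Submodule.mem_top : x ∈ A ⊔ B)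
        exact add_lie a b w ▸ add_mem (hA a ha w hw) (hB b hb w hw) }
  rcases eq_bot_or_eq_top W' with h | h
  · exact absurd (congrArg LieSubmodule.toSubmodule h) hW
  · exact congrArg LieSubmodule.toSubmodule h

theorem filt_eq_filtBy (N : LieSubalgebra ℂ L) (v : V) : filt N v = filtBy N.toSubmodule v := rfl

theorem filt_lt_succ_of_lt_sInf (htop : ⨆ k, filt N v k = ⊤) {t : ℕ}
    (ht : t < sInf {s | filt N v s = ⊤}) : filt N v t < filt N v (t + 1) := by
  refine (filtBy_mono _ v t.le_succ).lt_of_ne fun h => ht.not_ge (Nat.sInf_le ?_)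
  rw [Set.mem_ofPred_eq, ← htop, filt_eq_filtBy, iSup_filtBy_eq_of_succ_eq h.symm]

end

section

variable [LieModule ℂ L V] {A B : Submodule ℂ L} {W : Submodule ℂ V} {u : V}

theorem lieStable_span_singleton (h : ∀ x ∈ A, ⁅x, u⁆ ∈ Submodule.span ℂ {u}) :
    LieStable A (Submodule.span ℂ {u}) := by
  intro x hx w hw
  obtain ⟨c, rfl⟩ := Submodule.mem_span_singleton.mp hw
  rw [lie_smul]
  exact Submodule.smul_mem _ c (h x hx)

theorem lieStable_sup_span_singleton {P : Submodule ℂ L} {H : LieSubalgebra ℂ L}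
    {lam : Module.Dual ℂ H} (hP : ∀ x ∈ P, ⁅x, u⁆ = 0) (hH : ∀ x : H, ⁅(x : L), u⁆ = lam x • u) :
    LieStable (P ⊔ H.toSubmodule) (Submodule.span ℂ {u}) := by
  refine lieStable_span_singleton fun x hx => ?_
  obtain ⟨p, hp, h, hh, rfl⟩ := Submodule.mem_sup.mp hx
  rw [add_lie, hP p hp, zero_add, hH ⟨h, hh⟩]
  exact Submodule.smul_mem _ _ (Submodule.mem_span_singleton_self u)

theorem lieStable_stepBy (hAB : A ⊔ B = ⊤) (hW : LieStable B W) : LieStable B (stepBy A W) := by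
  intro b hb
  suffices stepBy A W ≤ (stepBy A W).comap (LieModule.toEnd ℂ L V b) from fun w hw => this hw
  refine stepBy_le (fun w hw => le_stepBy A W (hW b hb w hw)) fun a ha w hw => ?_
  obtain ⟨a', ha', b', hb', hba⟩ := Submodule.mem_sup.mp (hAB ▸ Submodule.mem_top : ⁅b, a⁆ ∈ A ⊔ B)
  rw [Submodule.mem_comap, LieModule.toEnd_apply_apply, leibniz_lie, ← hba, add_lie]
  exact add_mem (add_mem (lie_mem_stepBy ha' hw) (le_stepBy A W (hW b' hb' w hw)))
    (lie_mem_stepBy ha (hW b hb w hw))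

theorem lieStable_filtBy (hAB : A ⊔ B = ⊤) (hu : LieStable B (Submodule.span ℂ {u})) (k : ℕ) :
    LieStable B (filtBy A u k) := by
  induction k with
  | zero => exact hu
  | succ k ih => exact (filtBy_succ A u k).symm ▸ lieStable_stepBy hAB ih

theorem iSup_filtBy_eq_top [LieModule.IsIrreducible ℂ L V] (hAB : A ⊔ B = ⊤)
    (hu : LieStable B (Submodule.span ℂ {u})) (hu0 : u ≠ 0) : ⨆ k, filtBy A u k = ⊤ := by
  refine LieStable.eq_top hAB (lieStable_iSup_filtBy A u) ?_ ?_
  · intro b hb w hw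
    obtain ⟨k, hk⟩ := mem_iSup_filtBy.mp hw
    exact mem_iSup_filtBy.mpr ⟨k, lieStable_filtBy hAB hu k b hb w hk⟩
  · exact (Submodule.ne_bot_iff _).mpr ⟨u, mem_iSup_filtBy.mpr ⟨0, mem_filtBy A u 0⟩, hu0⟩

end

theorem IsTriangularDecomp.sup_eq_top {H npos nneg : LieSubalgebra ℂ L}
    (htri : IsTriangularDecomp H npos nneg) :
    npos.toSubmodule ⊔ H.toSubmodule ⊔ nneg.toSubmodule = ⊤ := by
  simpa [iSup_fin_three] using htri.directSum.submodule_iSup_eq_top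

section

variable [FiniteDimensional ℂ V] {N : LieSubalgebra ℂ L} {v : V}

theorem filt_sInf_eq_top (htop : ⨆ k, filt N v k = ⊤) :
    filt N v (sInf {s | filt N v s = ⊤}) = ⊤ :=
  Nat.sInf_mem (exists_filtBy_eq_top htop)

theorem filt_eq_top_of_sInf_le (htop : ⨆ k, filt N v k = ⊤) {t : ℕ}
    (ht : sInf {s | filt N v s = ⊤} ≤ t) : filt N v t = ⊤ :=
  top_unique ((filt_sInf_eq_top htop).symm.le.trans (filtBy_mono _ v ht))

theorem add_one_le_finrank_filt (hv : v ≠ 0) (htop : ⨆ k, filt N v k = ⊤) {t : ℕ}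
    (ht : t ≤ sInf {s | filt N v s = ⊤}) : t + 1 ≤ finrank ℂ (filt N v t) := by
  induction t with
  | zero => rw [filt_eq_filtBy, filtBy, Function.iterate_zero_apply, finrank_span_singleton hv]
  | succ t ih =>
    have := Submodule.finrank_lt_finrank_of_lt (filt_lt_succ_of_lt_sInf htop ht)
    have := ih (Nat.le_of_succ_le ht)
    omega

theorem hpCoeff_sInf_ne_zero (hv : v ≠ 0) (htop : ⨆ k, filt N v k = ⊤) :
    hpCoeff N v (sInf {s | filt N v s = ⊤}) ≠ 0 := by
  rcases h : sInf {s | filt N v s = ⊤} with _ | t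
  · rw [hpCoeff, filt_eq_filtBy, filtBy, Function.iterate_zero_apply, finrank_span_singleton hv]
    exact one_ne_zero
  · have := Submodule.finrank_lt_finrank_of_lt (filt_lt_succ_of_lt_sInf htop (by omega : t < _))
    simp only [hpCoeff]
    omega

theorem hpCoeff_eq_zero_of_sInf_lt (htop : ⨆ k, filt N v k = ⊤) {t : ℕ}
    (ht : sInf {s | filt N v s = ⊤} < t) : hpCoeff N v t = 0 := by
  obtain ⟨t, rfl⟩ := Nat.exists_eq_add_one_of_ne_zero (Nat.ne_zero_of_lt ht)
  rw [hpCoeff, filt_eq_top_of_sInf_le htop ht.le,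
    filt_eq_top_of_sInf_le htop (Nat.le_of_lt_succ ht), Nat.sub_self]

theorem natDegree_hp (hv : v ≠ 0) (htop : ⨆ k, filt N v k = ⊤) :
    (hp N v).natDegree = sInf {s | filt N v s = ⊤} := by
  refine Polynomial.natDegree_sum_C_mul_X_pow_eq ?_ (hpCoeff_sInf_ne_zero hv htop)
    fun t ht => hpCoeff_eq_zero_of_sInf_lt htop ht
  have := (add_one_le_finrank_filt hv htop le_rfl).trans (Submodule.finrank_le _)
  omega

end

theorem sInf_lowest_eq_degree_and_filtration_stabilizes_general
    {L : Type*} [LieRing L] [LieAlgebra ℂ L]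
    (H npos nneg : LieSubalgebra ℂ L) (htri : IsTriangularDecomp H npos nneg)
    {V : Type*} [AddCommGroup V] [Module ℂ V] [LieRingModule L V] [LieModule ℂ L V]
    [FiniteDimensional ℂ V] [LieModule.IsIrreducible ℂ L V]
    (lam : Module.Dual ℂ H) (v : V) (hv : v ≠ 0)
    (hv_npos : ∀ x ∈ npos, ⁅x, v⁆ = 0)
    (hv_wt : ∀ x : H, ⁅(x : L), v⁆ = lam x • v)
    (v' : V) (hv' : v' ≠ 0)
    (hv'_lowest : ∀ x ∈ nneg, ⁅x, v'⁆ = 0) :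
    sInf {s : ℕ | v' ∈ filt nneg v s} = (hp nneg v).natDegree ∧
      filt nneg v (sInf {s : ℕ | v' ∈ filt nneg v s}) = ⊤ := by
  set bplus := npos.toSubmodule ⊔ H.toSubmodule
  have hsup : bplus ⊔ nneg.toSubmodule = ⊤ := htri.sup_eq_top
  have hsup' : nneg.toSubmodule ⊔ bplus = ⊤ := (sup_comm _ _).trans hsup
  have hv_line : LieStable bplus (Submodule.span ℂ {v}) :=
    lieStable_sup_span_singleton hv_npos hv_wt
  have hv'_line : LieStable nneg.toSubmodule (Submodule.span ℂ {v'}) :=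
    lieStable_span_singleton fun x hx => by simp [hv'_lowest x hx]
  have hfilt_stable : ∀ s, LieStable bplus (filt nneg v s) :=
    lieStable_filtBy hsup' hv_line
  have htop : ⨆ s, filt nneg v s = ⊤ := iSup_filtBy_eq_top hsup' hv_line hv
  have hv'_top : ⨆ k, filtBy bplus v' k = ⊤ := iSup_filtBy_eq_top hsup hv'_line hv'
  have hset : {s | v' ∈ filt nneg v s} = {s | filt nneg v s = ⊤} := by
    ext s
    refine ⟨fun h => top_unique ?_, fun (h : filt nneg v s = ⊤) => ?_⟩
    · exact hv'_top ▸ iSup_le ((hfilt_stable s).filtBy_le h)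
    · exact show v' ∈ filt nneg v s from h ▸ Submodule.mem_top
  rw [hset]
  exact ⟨(natDegree_hp hv htop).symm, filt_sInf_eq_top htop⟩

/-- The minimal `s` such that the lowest weight vector `v'` of `V(λ)` lies in
`V(λ)_s` equals `deg p_λ(q)`, and the PBW filtration stabilizes exactly at that
step: `V(λ) = V(λ)_{s_λ}`. -/
theorem sInf_lowest_eq_degree_and_filtration_stabilizes
    {L : Type*} [LieRing L] [LieAlgebra ℂ L] [FiniteDimensional ℂ L]
    [LieAlgebra.IsSimple ℂ L]
    (H npos nneg : LieSubalgebra ℂ L) (htri : IsTriangularDecomp H npos nneg)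
    {V : Type*} [AddCommGroup V] [Module ℂ V] [LieRingModule L V] [LieModule ℂ L V]
    [FiniteDimensional ℂ V] [LieModule.IsIrreducible ℂ L V]
    (lam : Module.Dual ℂ H) (v : V) (hv : v ≠ 0)
    (hv_npos : ∀ x ∈ npos, ⁅x, v⁆ = 0)
    (hv_wt : ∀ x : H, ⁅(x : L), v⁆ = lam x • v)
    (v' : V) (hv' : v' ≠ 0)
    (hv'_lowest : ∀ x ∈ nneg, ⁅x, v'⁆ = 0) :
    sInf {s : ℕ | v' ∈ filt nneg v s} = (hp nneg v).natDegree ∧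
      filt nneg v (sInf {s : ℕ | v' ∈ filt nneg v s}) = ⊤ :=
  sInf_lowest_eq_degree_and_filtration_stabilizes_general H npos nneg htri lam v hv hv_npos hv_wt v'
    hv' hv'_lowest

end PBW
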